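/- arXiv:2103.16055 — 2 statements merged into one kernel-verified Lean document; each statement's English description precedes it below -/
import Mathlib

section
/- Let D, S, U, T be positive integers, κ an integer with 1 ≤ κ ≤ D, and let F : ℝ^D → ℝ be differentiable with L-Lipschitz gradient for some L > 0 (so that F(y) ≤ F(x) + ⟨∇F(x), y − x⟩ + (L/2)‖y − x‖² for all x, y). Let w* be a global minimizer of F. Let K_1, …, K_U > 0 with K = Σ_{i=1}^U K_i, and fix constants ρ₁ ≥ 0, 0 ≤ ρ₂ < 1, C ≥ 0, G ≥ 0, δ ∈ (0,1), σ ≥ 0. For each t ∈ {1, …, T}, let β_{i,t} ∈ {0,1} (not all zero) and b_t > 0, and suppose the iterates satisfy w_t = w_{t−1} − (1/L)(∇F(w_{t−1}) − o_t), where the aggregation-error vector o_t ∈ ℝ^D obeys ‖o_t‖² ≤ (1/K)·Σ_{i=1}^U K_i(ρ₁ + ρ₂‖∇F(w_{t−1})‖²)(1 − β_{i,t}) + C²·(1 + (1+δ)·((D−κ)/(S·D))·G² + σ²/(Σ_{i=1}^U K_i β_{i,t} b_t)²) + Σ_{i=1}^U β_{i,t}·(1+δ)·((D−κ)/D)·G².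 Then (1/T)·Σ_{t=1}^T ‖∇F(w_{t−1})‖² ≤ (2L/(T(1−ρ₂)))·(F(w_0) − F(w*)) + (2L/(T(1−ρ₂)))·Σ_{t=1}^T B_t, where B_t = (Σ_{i=1}^U K_i ρ₁ (1 − β_{i,t}))/(2LK) + (C²/(2L))·(1 + (1+δ)·((D−κ)/(S·D))·G² + σ²/(Σ_{i=1}^U K_i β_{i,t} b_t)²) + Σ_{i=1}^U β_{i,t}·(1+δ)·((D−κ)/(2LD))·G². -/
/-!
Each round is an inexact gradient step `w ↦ w - L⁻¹ (g - o)` with `g = ∇F(w)`. Plugging it into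
the descent inequality gives `‖g‖² - ‖o‖² ≤ 2L (F(w) - F(w⁺))`, and the aggregation-error bound
`‖o‖² ≤ ρ₂ ‖g‖² + 2L B_t` turns this into `(1 - ρ₂) ‖g‖² ≤ 2L (F(w) - F(w⁺) + B_t)`.
Summing over the rounds telescopes the function values down to `F(w₀) - F(w*)`.
-/

open scoped RealInnerProductSpace BigOperators

open Finset

theorem norm_sq_sub_norm_sq_le_of_descent {E : Type*} [NormedAddCommGroup E]
    [InnerProductSpace ℝ E] {F : E → ℝ} {L : ℝ} (hL : 0 < L) {x y g o : E}
    (hdesc : F y ≤ F x + ⟪g, y - x⟫ + (L / 2) * ‖y - x‖ ^ 2)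
    (hy : y = x - (1 / L) • (g - o)) :
    ‖g‖ ^ 2 - ‖o‖ ^ 2 ≤ 2 * L * (F x - F y) := by
  -- `y - x = -(g - o)/L`, and polarizing uses `‖g - (g - o)‖ = ‖o‖`.
  have hstep : ⟪g, y - x⟫ + (L / 2) * ‖y - x‖ ^ 2 = (‖o‖ ^ 2 - ‖g‖ ^ 2) / (2 * L) := by
    have hpol := norm_sub_sq_real g (g - o)
    rw [sub_sub_cancel] at hpol
    rw [hy, sub_sub_cancel_left, inner_neg_right, real_inner_smul_right, norm_neg, norm_smul,
      Real.norm_of_nonneg (by positivity), hpol]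
    field_simp
    ring
  rw [add_assoc, hstep] at hdesc
  have h := mul_le_mul_of_nonneg_left (sub_le_sub_right hdesc (F y)) (by positivity : 0 ≤ 2 * L)
  field_simp at h
  linarith

theorem one_div_sum_mul_sum_mul_add_le {ι : Type*} [Fintype ι] {K β : ι → ℝ}
    (hK : ∀ i, 0 ≤ K i) (hβ : ∀ i, 0 ≤ β i) (ρ : ℝ) {X : ℝ} (hX : 0 ≤ X) :
    1 / (∑ i, K i) * ∑ i, K i * (ρ + X) * (1 - β i) ≤
      (∑ i, K i * ρ * (1 - β i)) / ∑ i, K i + X := by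
  have hsplit : ∑ i, K i * (ρ + X) * (1 - β i) =
      ∑ i, K i * ρ * (1 - β i) + X * ∑ i, K i * (1 - β i) := by
    rw [mul_sum, ← sum_add_distrib]
    exact sum_congr rfl fun i _ => by ring
  have hweights : ∑ i, K i * (1 - β i) ≤ ∑ i, K i :=
    sum_le_sum fun i _ => mul_le_of_le_one_right (hK i) (by linarith [hβ i])
  have hmean : 1 / (∑ i, K i) * (X * ∑ i, K i * (1 - β i)) ≤ X := by
    rcases (sum_nonneg fun i _ => hK i : 0 ≤ ∑ i, K i).eq_or_lt with hzero | hpos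
    · simp [← hzero, hX]
    · rw [one_div_mul_eq_div, div_le_iff₀ hpos]
      exact mul_le_mul_of_nonneg_left hweights hX
  rw [hsplit, mul_add, one_div_mul_eq_div]
  exact add_le_add_right hmean _

theorem sum_le_mul_of_le_mul_sub_succ {T : ℕ} {f : ℕ → ℝ} {m c : ℝ} (hc : 0 ≤ c)
    (hm : ∀ n, m ≤ f n) {a b : Fin T → ℝ} (h : ∀ t : Fin T, a t ≤ c * (f t.1 - f (t.1 + 1) + b t)) :
    ∑ t, a t ≤ c * (f 0 - m + ∑ t, b t) := by
  have htel : ∑ t : Fin T, (f t.1 - f (t.1 + 1)) = f 0 - f T := by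
    rw [Fin.sum_univ_eq_sum_range (fun k => f k - f (k + 1)) T]
    exact sum_range_sub' f T
  calc ∑ t, a t ≤ ∑ t : Fin T, c * (f t.1 - f (t.1 + 1) + b t) := sum_le_sum fun t _ => h t
    _ = c * (f 0 - f T + ∑ t, b t) := by rw [← mul_sum, sum_add_distrib, htel]
    _ ≤ c * (f 0 - m + ∑ t, b t) := by gcongr; exact hm T

theorem one_div_mul_le_div_mul_of_mul_le {T r s c z : ℝ} (hT : 0 ≤ T) (hr : 0 < r)
    (h : r * s ≤ c * z) : 1 / T * s ≤ c / (T * r) * z :=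
  calc 1 / T * s = 1 / (T * r) * (r * s) := by
        rw [one_div_mul_eq_div, one_div_mul_eq_div, mul_comm r, mul_div_mul_right _ _ hr.ne']
    _ ≤ 1 / (T * r) * (c * z) := by gcongr
    _ = c / (T * r) * z := by ring

theorem obcsaa_convergence_rate_general
    (D S U T : ℕ)
    (κ : ℕ)
    (F : EuclideanSpace ℝ (Fin D) → ℝ) (L : ℝ) (hL : 0 < L)
    (hdesc : ∀ x y, F y ≤ F x + ⟪gradient F x, y - x⟫ + (L / 2) * ‖y - x‖ ^ 2)
    (wstar : EuclideanSpace ℝ (Fin D)) (hmin : ∀ x, F wstar ≤ F x)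
    (K : Fin U → ℝ) (hK : ∀ i, 0 < K i)
    (ρ₁ ρ₂ C G δ σ : ℝ)
    (hρ₂0 : 0 ≤ ρ₂) (hρ₂1 : ρ₂ < 1)
    (β : Fin T → Fin U → ℝ) (hβ : ∀ t i, β t i = 0 ∨ β t i = 1)
    (b : Fin T → ℝ)
    (w : ℕ → EuclideanSpace ℝ (Fin D)) (o : Fin T → EuclideanSpace ℝ (Fin D))
    (hupd : ∀ t : Fin T,
      w (t.1 + 1) = w t.1 - (1 / L) • (gradient F (w t.1) - o t))
    (ho : ∀ t : Fin T,
      ‖o t‖ ^ 2 ≤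
        (1 / (∑ i, K i)) *
            ∑ i, K i * (ρ₁ + ρ₂ * ‖gradient F (w t.1)‖ ^ 2) * (1 - β t i)
          + C ^ 2 * (1 + (1 + δ) * (((D : ℝ) - κ) / (S * D)) * G ^ 2
              + σ ^ 2 / (∑ i, K i * β t i * b t) ^ 2)
          + ∑ i, β t i * (1 + δ) * (((D : ℝ) - κ) / D) * G ^ 2) :
    (1 / (T : ℝ)) * ∑ t : Fin T, ‖gradient F (w t.1)‖ ^ 2 ≤
      (2 * L / ((T : ℝ) * (1 - ρ₂))) * (F (w 0) - F wstar)
      + (2 * L / ((T : ℝ) * (1 - ρ₂))) *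
        ∑ t : Fin T,
          ((∑ i, K i * ρ₁ * (1 - β t i)) / (2 * L * ∑ i, K i)
          + (C ^ 2 / (2 * L)) * (1 + (1 + δ) * (((D : ℝ) - κ) / (S * D)) * G ^ 2
              + σ ^ 2 / (∑ i, K i * β t i * b t) ^ 2)
          + ∑ i, β t i * (1 + δ) * (((D : ℝ) - κ) / (2 * L * D)) * G ^ 2) := by
  set B : Fin T → ℝ := fun t =>
    (∑ i, K i * ρ₁ * (1 - β t i)) / (2 * L * ∑ i, K i)
      + (C ^ 2 / (2 * L)) * (1 + (1 + δ) * (((D : ℝ) - κ) / (S * D)) * G ^ 2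
          + σ ^ 2 / (∑ i, K i * β t i * b t) ^ 2)
      + ∑ i, β t i * (1 + δ) * (((D : ℝ) - κ) / (2 * L * D)) * G ^ 2 with hB
  have hround : ∀ t : Fin T, (1 - ρ₂) * ‖gradient F (w t.1)‖ ^ 2 ≤
      2 * L * (F (w t.1) - F (w (t.1 + 1)) + B t) := by
    intro t
    have hdecr := norm_sq_sub_norm_sq_le_of_descent hL (hdesc _ _) (hupd t)
    have hmean := one_div_sum_mul_sum_mul_add_le (fun i => (hK i).le)
      (fun i => (hβ t i).elim (fun h => h.ge) (fun h => h ▸ zero_le_one)) ρ₁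
      (mul_nonneg hρ₂0 (sq_nonneg ‖gradient F (w t.1)‖))
    have hscale : 2 * L * B t = (∑ i, K i * ρ₁ * (1 - β t i)) / ∑ i, K i
        + C ^ 2 * (1 + (1 + δ) * (((D : ℝ) - κ) / (S * D)) * G ^ 2
          + σ ^ 2 / (∑ i, K i * β t i * b t) ^ 2)
        + ∑ i, β t i * (1 + δ) * (((D : ℝ) - κ) / D) * G ^ 2 := by
      have h2L : 2 * L ≠ 0 := by positivity
      rw [hB, mul_add, mul_add, ← mul_div_assoc, mul_div_mul_left _ _ h2L, ← mul_assoc (2 * L),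
        mul_div_cancel₀ _ h2L, mul_sum]
      congr 1
      exact sum_congr rfl fun i _ => by field_simp
    linarith [ho t]
  have hsum := sum_le_mul_of_le_mul_sub_succ (f := fun n => F (w n))
    (by positivity : 0 ≤ 2 * L) (fun n => hmin (w n)) hround
  rw [← mul_sum] at hsum
  rw [← mul_add]
  exact one_div_mul_le_div_mul_of_mul_le T.cast_nonneg (sub_pos.2 hρ₂1) hsum

/-- Theorem 1 of the paper: expected convergence rate of 1-bit CS federated
learning over the air with learning rate `α = 1/L`, stated deterministically. -/
theorem obcsaa_convergence_rate
    (D S U T : ℕ) (hD : 0 < D) (hS : 0 < S) (hU : 0 < U) (hT : 0 < T)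
    (κ : ℕ) (hκ1 : 1 ≤ κ) (hκD : κ ≤ D)
    (F : EuclideanSpace ℝ (Fin D) → ℝ) (L : ℝ) (hL : 0 < L)
    (hdiff : Differentiable ℝ F)
    (hlip : ∀ x y, ‖gradient F x - gradient F y‖ ≤ L * ‖x - y‖)
    (hdesc : ∀ x y, F y ≤ F x + ⟪gradient F x, y - x⟫ + (L / 2) * ‖y - x‖ ^ 2)
    (wstar : EuclideanSpace ℝ (Fin D)) (hmin : ∀ x, F wstar ≤ F x)
    (K : Fin U → ℝ) (hK : ∀ i, 0 < K i)
    (ρ₁ ρ₂ C G δ σ : ℝ)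
    (hρ₁ : 0 ≤ ρ₁) (hρ₂0 : 0 ≤ ρ₂) (hρ₂1 : ρ₂ < 1)
    (hC : 0 ≤ C) (hG : 0 ≤ G) (hδ0 : 0 < δ) (hδ1 : δ < 1) (hσ : 0 ≤ σ)
    (β : Fin T → Fin U → ℝ) (hβ : ∀ t i, β t i = 0 ∨ β t i = 1)
    (hβne : ∀ t, ∃ i, β t i ≠ 0)
    (b : Fin T → ℝ) (hb : ∀ t, 0 < b t)
    (w : ℕ → EuclideanSpace ℝ (Fin D)) (o : Fin T → EuclideanSpace ℝ (Fin D))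
    (hupd : ∀ t : Fin T,
      w (t.1 + 1) = w t.1 - (1 / L) • (gradient F (w t.1) - o t))
    (ho : ∀ t : Fin T,
      ‖o t‖ ^ 2 ≤
        (1 / (∑ i, K i)) *
            ∑ i, K i * (ρ₁ + ρ₂ * ‖gradient F (w t.1)‖ ^ 2) * (1 - β t i)
          + C ^ 2 * (1 + (1 + δ) * (((D : ℝ) - κ) / (S * D)) * G ^ 2
              + σ ^ 2 / (∑ i, K i * β t i * b t) ^ 2)
          + ∑ i, β t i * (1 + δ) * (((D : ℝ) - κ) / D) * G ^ 2) :
    (1 / (T : ℝ)) * ∑ t : Fin T, ‖gradient F (w t.1)‖ ^ 2 ≤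
      (2 * L / ((T : ℝ) * (1 - ρ₂))) * (F (w 0) - F wstar)
      + (2 * L / ((T : ℝ) * (1 - ρ₂))) *
        ∑ t : Fin T,
          ((∑ i, K i * ρ₁ * (1 - β t i)) / (2 * L * ∑ i, K i)
          + (C ^ 2 / (2 * L)) * (1 + (1 + δ) * (((D : ℝ) - κ) / (S * D)) * G ^ 2
              + σ ^ 2 / (∑ i, K i * β t i * b t) ^ 2)
          + ∑ i, β t i * (1 + δ) * (((D : ℝ) - κ) / (2 * L * D)) * G ^ 2) :=
  obcsaa_convergence_rate_general D S U T κ F L hL hdesc wstar hmin K hK ρ₁ ρ₂ C G δ σ hρ₂0 hρ₂1 β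
    hβ b w o hupd ho
end

section
/- Let D be a positive integer and F : ℝ^D → ℝ be differentiable with L-Lipschitz gradient for some L > 0 (so that F(y) ≤ F(x) + ⟨∇F(x), y − x⟩ + (L/2)‖y − x‖² for all x, y). Let U be a positive integer, K_1, …, K_U > 0 with K = Σ_{i=1}^U K_i, β_1, …, β_U ∈ {0,1}, ρ₁ ≥ 0, ρ₂ ≥ 0, and E ≥ 0. Suppose w' = w − (1/L)(∇F(w) − o) where the error vector o ∈ ℝ^D satisfies ‖o‖² ≤ (1/K)·Σ_{i=1}^U K_i(ρ₁ + ρ₂‖∇F(w)‖²)(1 − β_i) + E. Then F(w') ≤ F(w) − (1/(2L) − Σ_{i=1}^U K_i ρ₂ (1 − β_i)/(2LK))·‖∇F(w)‖² + Σ_{i=1}^U K_i ρ₁ (1 − β_i)/(2LK) + E/(2L). -/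
open scoped RealInnerProductSpace BigOperators

/-!
With the descent inequality at `w`, the perturbed step `w - (1/L)(∇F(w) - o)` lowers `F` by
`‖∇F(w)‖²/(2L)` up to the error term `‖o‖²/(2L)`: the first-order and quadratic terms
combine by completing the square. Inserting the bound on `‖o‖²` and splitting off its
`ρ₂‖∇F(w)‖²` part, which moves into the coefficient of `‖∇F(w)‖²`, gives the claim.
-/

section DescentStep

variable {E : Type*} [NormedAddCommGroup E] [InnerProductSpace ℝ E]

-- `‖g - o‖² - 2⟪g, g - o⟫ = ‖o‖² - ‖g‖²`
lemma inner_neg_smul_add_half_mul_norm_sq (g o : E) {L : ℝ} (hL : L ≠ 0) :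
    ⟪g, -((1 / L) • (g - o))⟫ + L / 2 * ‖-((1 / L) • (g - o))‖ ^ 2
      = ‖o‖ ^ 2 / (2 * L) - ‖g‖ ^ 2 / (2 * L) := by
  rw [norm_neg, norm_smul, mul_pow, Real.norm_eq_abs, sq_abs, inner_neg_right,
    real_inner_smul_right, inner_sub_right, real_inner_self_eq_norm_sq, norm_sub_sq_real]
  field_simp
  ring

lemma descent_step_with_error {F : E → ℝ} {g w : E} {L : ℝ} (hL : L ≠ 0)
    (hdesc : ∀ y, F y ≤ F w + ⟪g, y - w⟫ + L / 2 * ‖y - w‖ ^ 2) (o : E) :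
    F (w - (1 / L) • (g - o)) ≤ F w - ‖g‖ ^ 2 / (2 * L) + ‖o‖ ^ 2 / (2 * L) := by
  have h := hdesc (w - (1 / L) • (g - o))
  rw [sub_sub_cancel_left, add_assoc, inner_neg_smul_add_half_mul_norm_sq g o hL] at h
  linarith

end DescentStep

lemma sum_mul_add_mul_mul_eq {ι : Type*} (s : Finset ι) (K c : ι → ℝ) (a b t : ℝ) :
    ∑ i ∈ s, K i * (a + b * t) * c i
      = ∑ i ∈ s, K i * a * c i + t * ∑ i ∈ s, K i * b * c i := by
  rw [Finset.mul_sum, ← Finset.sum_add_distrib]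
  exact Finset.sum_congr rfl fun i _ => by ring

theorem per_iteration_descent_general
    (D : ℕ)
    (F : EuclideanSpace ℝ (Fin D) → ℝ) (L : ℝ) (hL : 0 < L)
    (hdesc : ∀ x y, F y ≤ F x + ⟪gradient F x, y - x⟫ + (L / 2) * ‖y - x‖ ^ 2)
    (U : ℕ) (K : Fin U → ℝ)
    (β : Fin U → ℝ)
    (ρ₁ ρ₂ E : ℝ)
    (w o : EuclideanSpace ℝ (Fin D))
    (ho : ‖o‖ ^ 2 ≤
      (1 / (∑ i, K i)) *
          ∑ i, K i * (ρ₁ + ρ₂ * ‖gradient F w‖ ^ 2) * (1 - β i) + E) :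
    F (w - (1 / L) • (gradient F w - o)) ≤
      F w
      - (1 / (2 * L) - (∑ i, K i * ρ₂ * (1 - β i)) / (2 * L * ∑ i, K i)) *
          ‖gradient F w‖ ^ 2
      + (∑ i, K i * ρ₁ * (1 - β i)) / (2 * L * ∑ i, K i)
      + E / (2 * L) := by
  have hstep := descent_step_with_error hL.ne' (hdesc w) o
  rw [sum_mul_add_mul_mul_eq] at ho
  have herr : ‖o‖ ^ 2 / (2 * L) ≤
      (∑ i, K i * ρ₂ * (1 - β i)) / (2 * L * ∑ i, K i) * ‖gradient F w‖ ^ 2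
        + (∑ i, K i * ρ₁ * (1 - β i)) / (2 * L * ∑ i, K i) + E / (2 * L) :=
    calc ‖o‖ ^ 2 / (2 * L)
        ≤ ((1 / ∑ i, K i) * (∑ i, K i * ρ₁ * (1 - β i)
            + ‖gradient F w‖ ^ 2 * ∑ i, K i * ρ₂ * (1 - β i)) + E) / (2 * L) := by
          gcongr
      _ = _ := by ring
  linear_combination hstep + herr

/-- Per-iteration inequality (equation (48) of the paper), combining the
one-step descent inequality with the bound on `‖o‖²`. -/
theorem per_iteration_descent
    (D : ℕ) (hD : 0 < D)
    (F : EuclideanSpace ℝ (Fin D) → ℝ) (L : ℝ) (hL : 0 < L)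
    (hdiff : Differentiable ℝ F)
    (hlip : ∀ x y, ‖gradient F x - gradient F y‖ ≤ L * ‖x - y‖)
    (hdesc : ∀ x y, F y ≤ F x + ⟪gradient F x, y - x⟫ + (L / 2) * ‖y - x‖ ^ 2)
    (U : ℕ) (hU : 0 < U) (K : Fin U → ℝ) (hK : ∀ i, 0 < K i)
    (β : Fin U → ℝ) (hβ : ∀ i, β i = 0 ∨ β i = 1)
    (ρ₁ ρ₂ E : ℝ) (hρ₁ : 0 ≤ ρ₁) (hρ₂ : 0 ≤ ρ₂) (hE : 0 ≤ E)
    (w o : EuclideanSpace ℝ (Fin D))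
    (ho : ‖o‖ ^ 2 ≤
      (1 / (∑ i, K i)) *
          ∑ i, K i * (ρ₁ + ρ₂ * ‖gradient F w‖ ^ 2) * (1 - β i) + E) :
    F (w - (1 / L) • (gradient F w - o)) ≤
      F w
      - (1 / (2 * L) - (∑ i, K i * ρ₂ * (1 - β i)) / (2 * L * ∑ i, K i)) *
          ‖gradient F w‖ ^ 2
      + (∑ i, K i * ρ₁ * (1 - β i)) / (2 * L * ∑ i, K i)
      + E / (2 * L) :=
  per_iteration_descent_general D F L hL hdesc U K β ρ₁ ρ₂ E w o ho
end
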